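/- Let (X,d) be a separable metric space, 1 ≤ p < ∞, and μ ∈ P_p(X). Let Y_1, Y_2, … be i.i.d. X-valued random elements with common distribution μ, and let bar μ_n := (1/n)∑_{i=1}^n δ_{Y_i} be the empirical measures. Then, almost surely, bar μ_n → μ in τ_w^p; that is, almost surely bar μ_n → μ weakly and (1/n)∑_{i=1}^n d(x,Y_i)^p → ∫_X d(x,y)^p dμ(y) for every x ∈ X. -/

import Mathlib

open MeasureTheory Filter Topology ProbabilityTheory

/-- `f_p(μ,x) := ∫ d(x,y)^p dμ(y)`. -/
noncomputable def fp {X : Type*} [MetricSpace X] [MeasurableSpace X]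
    (p : ℝ) (μ : Measure X) (x : X) : ℝ :=
  ∫ y, dist x y ^ p ∂μ

/-- Membership in `P_p(X)`. -/
def MemPp {X : Type*} [MetricSpace X] [MeasurableSpace X] (p : ℝ) (μ : Measure X) : Prop :=
  ∀ x : X, Integrable (fun y => dist x y ^ p) μ

/-- Weak convergence of a sequence of Borel measures. -/
def WeakConv {X : Type*} [MetricSpace X] [MeasurableSpace X]
    (μs : ℕ → Measure X) (μ : Measure X) : Prop :=
  ∀ g : BoundedContinuousFunction X ℝ,
    Tendsto (fun n => ∫ y, g y ∂(μs n)) atTop (𝓝 (∫ y, g y ∂μ))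

/-- Convergence in `τ_w^p`. -/
def TauWp {X : Type*} [MetricSpace X] [MeasurableSpace X]
    (p : ℝ) (μs : ℕ → Measure X) (μ : Measure X) : Prop :=
  WeakConv μs μ ∧ ∀ x : X, Tendsto (fun n => fp p (μs n) x) atTop (𝓝 (fp p μ x))

/-- Joint Fréchet p-mean `F_p(μ,C)`. -/
def Fp {X : Type*} [MetricSpace X] [MeasurableSpace X]
    (p : ℝ) (μ : Measure X) (C : Set X) : Set X :=
  {x ∈ C | ∀ x' ∈ C, fp p μ x ≤ fp p μ x'}

/-- Support of a measure. -/
def msupport {X : Type*} [MetricSpace X] [MeasurableSpace X] (μ : Measure X) : Set X :=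
  {x : X | ∀ U : Set X, IsOpen U → x ∈ U → 0 < μ U}

/-- Kuratowski upper limit. -/
def KurLs {X : Type*} [MetricSpace X] (C : ℕ → Set X) : Set X :=
  ⋂ n, closure (⋃ m, ⋃ (_ : n ≤ m), C m)

/-- Kuratowski lower limit. -/
def KurLi {X : Type*} [MetricSpace X] (C : ℕ → Set X) : Set X :=
  {x : X | ∀ ε : ℝ, 0 < ε → ∀ᶠ n in atTop, ∃ y ∈ C n, dist x y < ε}

/-- One-sided Hausdorff distance `ρ(C,C') = max_{x ∈ C} min_{x' ∈ C'} d(x,x')`. -/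
noncomputable def rho {X : Type*} [MetricSpace X] (C C' : Set X) : ℝ :=
  ⨆ x ∈ C, Metric.infDist x C'

/-- Empirical measure of the first `n` samples. -/
noncomputable def empMeasure {X Ω : Type*} [MeasurableSpace X]
    (Y : ℕ → Ω → X) (n : ℕ) (ω : Ω) : Measure X :=
  (n : ENNReal)⁻¹ • ∑ i ∈ Finset.range n, Measure.dirac (Y i ω)

/-- Effros σ-algebra on subsets of `X`. -/
def effros (X : Type*) [TopologicalSpace X] : MeasurableSpace (Set X) :=
  MeasurableSpace.generateFrom
    {S : Set (Set X) | ∃ U : Set X, IsOpen U ∧ S = {C : Set X | (C ∩ U).Nonempty}}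

/-- The relation `x ⇝_μ x'`. -/
def LeadsTo {X : Type*} [MetricSpace X] [MeasurableSpace X] (μ : Measure X) (x x' : X) : Prop :=
  ∃ ε₀ > (0 : ℝ), ∀ ε : ℝ, 0 < ε → ε ≤ ε₀ →
    ∃ φ : X → X, Set.MapsTo φ (Metric.ball x ε) (Metric.ball x' ε) ∧
      Measurable ((Metric.ball x ε).restrict φ) ∧
      ∀ z ∈ Metric.ball x ε, ∀ᵐ y ∂μ, dist (φ z) y = dist z y

/-- The equivalence relation `x ∼_μ x'`. -/
def SimEq {X : Type*} [MetricSpace X] [MeasurableSpace X] (μ : Measure X) (x x' : X) : Prop :=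
  LeadsTo μ x x' ∧ LeadsTo μ x' x

/-- The equivalence class `[x]_μ`. -/
def eqClass {X : Type*} [MetricSpace X] [MeasurableSpace X] (μ : Measure X) (x : X) : Set X :=
  {x' : X | SimEq μ x x'}

/-! For a fixed integrable test function `g`, the strong law of large numbers gives
`∫ g d(μ̄ₙ) → ∫ g dμ` almost surely, and separability reduces both convergences to countably many
such `g`. For weak convergence take the indicators of finite unions of members of a countable
basis: every open `G` is a countable directed union of such sets, which gives the portmanteau
inequality `μ G ≤ liminf μ̄ₙ G`. For the moments take `g = d(x, ·)^p` with `x` in a countable dense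
set; by Minkowski's inequality `x ↦ f_p(ν, x)^(1/p)` is `1`-Lipschitz for every `ν`, so the
convergence extends to all `x` by equicontinuity. -/

section EmpiricalMeasure

variable {X Ω : Type*} [MeasurableSpace X] (Y : ℕ → Ω → X) (n : ℕ) (ω : Ω)

instance isProbabilityMeasure_empMeasure_succ : IsProbabilityMeasure (empMeasure Y (n + 1) ω) :=
  ⟨by simp [empMeasure, ENNReal.inv_mul_cancel]⟩

variable [MeasurableSingletonClass X]

theorem integrable_empMeasure (f : X → ℝ) : Integrable f (empMeasure Y n ω) := by
  rcases n.eq_zero_or_pos with rfl | hn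
  · simp [empMeasure]
  · exact (integrable_finsetSum_measure.2 fun i _ => integrable_dirac enorm_lt_top).smul_measure
      (by simpa using hn.ne')

theorem integral_empMeasure (f : X → ℝ) :
    ∫ y, f y ∂empMeasure Y n ω = (∑ i ∈ Finset.range n, f (Y i ω)) / n := by
  rw [empMeasure, integral_smul_measure,
    integral_finsetSum_measure fun i _ => integrable_dirac enorm_lt_top]
  simp [integral_dirac, div_eq_inv_mul]

end EmpiricalMeasure

section StrongLaw

variable {X Ω : Type*} [MeasurableSpace X] [MeasurableSingletonClass X] {mΩ : MeasurableSpace Ω}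
  {P : Measure Ω} {μ : Measure X} {Y : ℕ → Ω → X}

theorem ae_tendsto_integral_empMeasure (hY : ∀ i, Measurable (Y i))
    (hindep : Pairwise fun i j => IndepFun (Y i) (Y j) P) (hlaw : ∀ i, P.map (Y i) = μ)
    {g : X → ℝ} (hg : Measurable g) (hgμ : Integrable g μ) :
    ∀ᵐ ω ∂P, Tendsto (fun n => ∫ y, g y ∂empMeasure Y n ω) atTop (𝓝 (∫ y, g y ∂μ)) := by
  have hident : ∀ i, IdentDistrib (g ∘ Y i) (g ∘ Y 0) P P := fun i =>
    (IdentDistrib.mk (hY i).aemeasurable (hY 0).aemeasurable (by rw [hlaw, hlaw])).comp hg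
  have hint : Integrable (g ∘ Y 0) P :=
    (integrable_map_measure hg.aestronglyMeasurable (hY 0).aemeasurable).1 (hlaw 0 ▸ hgμ)
  have hmean : P[g ∘ Y 0] = ∫ y, g y ∂μ := by
    rw [← hlaw 0, integral_map (hY 0).aemeasurable hg.aestronglyMeasurable, Function.comp_def]
  simp_rw [integral_empMeasure, ← hmean]
  exact strong_law_ae_real (fun i => g ∘ Y i) hint (fun i j hij => (hindep hij).comp hg hg) hident

theorem ae_tendsto_empMeasure_apply [IsFiniteMeasure μ] (hY : ∀ i, Measurable (Y i))
    (hindep : Pairwise fun i j => IndepFun (Y i) (Y j) P) (hlaw : ∀ i, P.map (Y i) = μ)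
    {V : Set X} (hV : MeasurableSet V) :
    ∀ᵐ ω ∂P, Tendsto (fun n => empMeasure Y (n + 1) ω V) atTop (𝓝 (μ V)) := by
  filter_upwards [ae_tendsto_integral_empMeasure hY hindep hlaw (measurable_one.indicator hV)
    ((integrable_const 1).indicator hV)] with ω hω
  simp only [integral_indicator_one hV, measureReal_def] at hω
  exact (ENNReal.tendsto_toReal_iff (fun n => measure_ne_top _ _) (measure_ne_top _ _)).1
    (hω.comp (tendsto_add_atTop_nat 1))

end StrongLaw

theorem Set.sUnion_eq_biUnion_finite_subset {α : Type*} (S : Set (Set α)) :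
    ⋃₀ S = ⋃ t ∈ {t | t.Finite ∧ t ⊆ S}, ⋃₀ t := by
  refine subset_antisymm (fun x ⟨s, hs, hx⟩ => ?_)
    (Set.iUnion₂_subset fun t ht => Set.sUnion_mono ht.2)
  exact Set.mem_biUnion ⟨Set.finite_singleton s, Set.singleton_subset_iff.2 hs⟩ ⟨s, rfl, hx⟩

theorem le_liminf_measure_biUnion_of_tendsto {α ι : Type*} [MeasurableSpace α] {μ : Measure α}
    {νs : ℕ → Measure α} {s : ι → Set α} {t : Set ι} (ht : t.Countable)
    (hdir : DirectedOn (fun i j => s i ⊆ s j) t)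
    (h : ∀ i ∈ t, Tendsto (fun n => νs n (s i)) atTop (𝓝 (μ (s i)))) :
    μ (⋃ i ∈ t, s i) ≤ atTop.liminf fun n => νs n (⋃ i ∈ t, s i) := by
  rw [measure_biUnion_eq_iSup ht hdir]
  refine iSup₂_le fun i hi => (h i hi).liminf_eq ▸ liminf_le_liminf ?_
  exact Eventually.of_forall fun n => measure_mono (Set.subset_biUnion_of_mem hi)

theorem weakConv_of_tendsto_measure_sUnion {X : Type*} [MetricSpace X] [MeasurableSpace X]
    [OpensMeasurableSpace X] {νs : ℕ → Measure X} [∀ n, IsProbabilityMeasure (νs n)]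
    {μ : Measure X} [IsProbabilityMeasure μ] {B : Set (Set X)}
    (hB : TopologicalSpace.IsTopologicalBasis B) (hBc : B.Countable)
    (h : ∀ t ∈ {t | t.Finite ∧ t ⊆ B}, Tendsto (fun n => νs n (⋃₀ t)) atTop (𝓝 (μ (⋃₀ t)))) :
    WeakConv νs μ := by
  have hopen : ∀ G, IsOpen G → μ G ≤ atTop.liminf fun n => νs n G := by
    intro G hG
    rw [hB.open_eq_sUnion' hG, Set.sUnion_eq_biUnion_finite_subset]
    refine le_liminf_measure_biUnion_of_tendsto
      (Set.countable_ofPred_finite_subset (hBc.mono (Set.sep_subset _ _))) ?_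
      fun t ht => h t ⟨ht.1, ht.2.trans (Set.sep_subset _ _)⟩
    exact fun t ht t' ht' => ⟨t ∪ t', ⟨ht.1.union ht'.1, Set.union_subset ht.2 ht'.2⟩,
      Set.sUnion_mono Set.subset_union_left, Set.sUnion_mono Set.subset_union_right⟩
  exact ProbabilityMeasure.tendsto_iff_forall_integral_tendsto.1
    (tendsto_of_forall_isOpen_le_liminf_nat' (μs := fun n => ⟨νs n, inferInstance⟩)
      (μ := ⟨μ, inferInstance⟩) hopen)

section Fp

variable {X : Type*} [MetricSpace X] [MeasurableSpace X] {p : ℝ} {ν : Measure X}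

theorem fp_nonneg (x : X) : 0 ≤ fp p ν x :=
  integral_nonneg fun _ => Real.rpow_nonneg dist_nonneg p

theorem eLpNorm'_dist_eq_fp_rpow_inv (hp : 0 < p) {x : X}
    (hx : Integrable (fun y => dist x y ^ p) ν) :
    eLpNorm' (fun y => dist x y) p ν = ENNReal.ofReal (fp p ν x ^ p⁻¹) := by
  have hpow : ∀ y, ‖dist x y‖ₑ ^ p = ENNReal.ofReal (dist x y ^ p) := fun y => by
    rw [Real.enorm_of_nonneg dist_nonneg, ENNReal.ofReal_rpow_of_nonneg dist_nonneg hp.le]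
  rw [eLpNorm'_eq_lintegral_enorm, one_div, funext hpow,
    ← ofReal_integral_eq_lintegral_ofReal hx (ae_of_all _ fun _ => Real.rpow_nonneg dist_nonneg p)]
  exact ENNReal.ofReal_rpow_of_nonneg (fp_nonneg x) (inv_nonneg.2 hp.le)

variable [OpensMeasurableSpace X] [IsProbabilityMeasure ν]

theorem lipschitzWith_fp_rpow_inv (hp : 1 ≤ p) (hν : MemPp p ν) :
    LipschitzWith 1 fun x => fp p ν x ^ p⁻¹ := by
  have hp0 : 0 < p := zero_lt_one.trans_le hp
  refine LipschitzWith.of_le_add fun x x' => ?_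
  have hminkowski : eLpNorm' (fun y => dist x y) p ν
      ≤ ‖dist x x'‖ₑ + eLpNorm' (fun y => dist x' y) p ν :=
    calc eLpNorm' (fun y => dist x y) p ν
        ≤ eLpNorm' ((fun _ => dist x x') + fun y => dist x' y) p ν := by
          refine eLpNorm'_mono_ae hp0.le (ae_of_all _ fun y => ?_)
          simp only [Pi.add_apply, Real.norm_of_nonneg dist_nonneg,
            Real.norm_of_nonneg (add_nonneg dist_nonneg dist_nonneg)]
          exact dist_triangle x x' y
      _ ≤ eLpNorm' (fun _ => dist x x') p ν + eLpNorm' (fun y => dist x' y) p ν :=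
          eLpNorm'_add_le aestronglyMeasurable_const
            (continuous_const.dist continuous_id).aestronglyMeasurable hp
      _ = ‖dist x x'‖ₑ + eLpNorm' (fun y => dist x' y) p ν := by
          rw [eLpNorm'_const _ hp0, measure_univ, ENNReal.one_rpow, mul_one]
  have hroot_nonneg := Real.rpow_nonneg (fp_nonneg (p := p) (ν := ν) x') p⁻¹
  rw [eLpNorm'_dist_eq_fp_rpow_inv hp0 (hν x), eLpNorm'_dist_eq_fp_rpow_inv hp0 (hν x'),
    Real.enorm_of_nonneg dist_nonneg, ← ENNReal.ofReal_add dist_nonneg hroot_nonneg,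
    ENNReal.ofReal_le_ofReal_iff (add_nonneg dist_nonneg hroot_nonneg)] at hminkowski
  linarith

theorem tendsto_fp_of_dense (hp : 1 ≤ p) (hν : MemPp p ν) {νs : ℕ → Measure X}
    [∀ n, IsProbabilityMeasure (νs n)] (hνs : ∀ n, MemPp p (νs n)) {D : Set X} (hD : Dense D)
    (h : ∀ x ∈ D, Tendsto (fun n => fp p (νs n) x) atTop (𝓝 (fp p ν x))) (x : X) :
    Tendsto (fun n => fp p (νs n) x) atTop (𝓝 (fp p ν x)) := by
  have hp0 : 0 < p := zero_lt_one.trans_le hp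
  have hclosed :
      IsClosed {x | Tendsto (fun n => fp p (νs n) x ^ p⁻¹) atTop (𝓝 (fp p ν x ^ p⁻¹))} :=
    (LipschitzWith.uniformEquicontinuous _ 1 fun n => lipschitzWith_fp_rpow_inv hp (hνs n))
      |>.equicontinuous.isClosed_setOfPred_tendsto (lipschitzWith_fp_rpow_inv hp hν).continuous
  have hroot := hclosed.closure_subset_iff.2
    (fun x hx => (h x hx).rpow_const (Or.inr (inv_nonneg.2 hp0.le))) (hD x)
  simpa only [Real.rpow_inv_rpow (fp_nonneg _) hp0.ne'] using
    hroot.rpow_const (Or.inr hp0.le)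

end Fp

theorem frechet_stmt13_general {X : Type*} [MetricSpace X] [TopologicalSpace.SeparableSpace X]
    [MeasurableSpace X] [BorelSpace X]
    (p : ℝ) (hp : 1 ≤ p)
    (μ : Measure X) (hμprob : IsProbabilityMeasure μ) (hμPp : MemPp p μ)
    {Ω : Type*} [MeasurableSpace Ω] (P : Measure Ω)
    (Y : ℕ → Ω → X) (hYmeas : ∀ i, Measurable (Y i))
    (hindep : iIndepFun Y P)
    (hlaw : ∀ i, Measure.map (Y i) P = μ) :
    ∀ᵐ ω ∂P, TauWp p (fun n => empMeasure Y (n + 1) ω) μ := by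
  have : SecondCountableTopology X := UniformSpace.secondCountable_of_separable X
  obtain ⟨B, hBc, -, hB⟩ := TopologicalSpace.exists_countable_basis X
  obtain ⟨D, hDc, hD⟩ := TopologicalSpace.exists_countable_dense X
  have hpair : Pairwise fun i j => IndepFun (Y i) (Y j) P := fun i j hij => hindep.indepFun hij
  have hsets : ∀ᵐ ω ∂P, ∀ t ∈ {t | t.Finite ∧ t ⊆ B},
      Tendsto (fun n => empMeasure Y (n + 1) ω (⋃₀ t)) atTop (𝓝 (μ (⋃₀ t))) :=
    (ae_ball_iff (Set.countable_ofPred_finite_subset hBc)).2 fun t ht =>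
      ae_tendsto_empMeasure_apply hYmeas hpair hlaw
        (isOpen_sUnion fun s hs => hB.isOpen (ht.2 hs)).measurableSet
  have hpoints : ∀ᵐ ω ∂P, ∀ x ∈ D,
      Tendsto (fun n => fp p (empMeasure Y (n + 1) ω) x) atTop (𝓝 (fp p μ x)) :=
    (ae_ball_iff hDc).2 fun x _ =>
      (ae_tendsto_integral_empMeasure hYmeas hpair hlaw
        ((measurable_const.dist measurable_id).pow_const p) (hμPp x)).mono
        fun ω hω => hω.comp (tendsto_add_atTop_nat 1)
  filter_upwards [hsets, hpoints] with ω hω_sets hω_points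
  exact ⟨weakConv_of_tendsto_measure_sUnion hB hBc hω_sets,
    tendsto_fp_of_dense hp hμPp (fun n x => integrable_empMeasure Y (n + 1) ω _) hD hω_points⟩

theorem frechet_stmt13 {X : Type*} [MetricSpace X] [TopologicalSpace.SeparableSpace X]
    [MeasurableSpace X] [BorelSpace X]
    (p : ℝ) (hp : 1 ≤ p)
    (μ : Measure X) (hμprob : IsProbabilityMeasure μ) (hμPp : MemPp p μ)
    {Ω : Type*} [MeasurableSpace Ω] (P : Measure Ω) (hPprob : IsProbabilityMeasure P)
    (Y : ℕ → Ω → X) (hYmeas : ∀ i, Measurable (Y i))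
    (hindep : iIndepFun Y P)
    (hlaw : ∀ i, Measure.map (Y i) P = μ) :
    ∀ᵐ ω ∂P, TauWp p (fun n => empMeasure Y (n + 1) ω) μ :=
  frechet_stmt13_general p hp μ hμprob hμPp P Y hYmeas hindep hlaw
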